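/- arXiv:1809.08961 — 4 statements merged into one kernel-verified Lean document; each statement's English description precedes it below -/
import Mathlib

section
/- Let p be prime and n ≥ 1. Define the discrete Radon transform of f : (Z/pZ)^n → C along the line through a with direction b ≠ 0 by (Rf)(a;b) = (1/p) * sum_{j=0}^{p-1} f(a + j·b), and the conjugate transform (R*g)(a) = (1/(p^n - 1)) * sum_{b ≠ 0} g(a;b). Then for every nonzero y in (Z/pZ)^n, the character f_y(x) = exp(2*pi*i*<x,y>/p) satisfies (R*R f_y) = ((p^{n-1}-1)/(p^n-1)) · f_y, and for y = 0 it satisfies (R*R f_0) = f_0. -/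
/-!
Writing `f_y x = ψ (x ⬝ᵥ y)` for the standard primitive character `ψ` of `ZMod p`, along the line
`a + t • b` we get `f_y (a + t • b) = f_y a · ψ (t · (b ⬝ᵥ y))`; averaging over `t` gives `f_y a`
when `b ⬝ᵥ y = 0` and `0` otherwise, by orthogonality of `ψ`. Hence `R*R f_y` is `f_y` times the
proportion of nonzero directions `b` orthogonal to `y`: all `p ^ n - 1` of them when `y = 0`, and
otherwise the `p ^ (n - 1) - 1` nonzero vectors of the hyperplane `y⊥`.
-/

/-- The discrete Radon transform: average of `f` along the arithmetic
progression through `a` with direction `b`. -/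
noncomputable def discreteRadon (p n : ℕ) (f : (Fin n → ZMod p) → ℂ)
    (a b : Fin n → ZMod p) : ℂ :=
  (1 / (p : ℂ)) * ∑ j ∈ Finset.range p, f (a + j • b)

/-- The conjugate discrete Radon transform: average over all nonzero
directions `b`. -/
noncomputable def discreteRadonConj (p n : ℕ) [NeZero p]
    (g : (Fin n → ZMod p) → (Fin n → ZMod p) → ℂ) (a : Fin n → ZMod p) : ℂ :=
  (1 / ((p : ℂ) ^ n - 1)) * ∑ b ∈ Finset.univ.filter (fun b : Fin n → ZMod p => b ≠ 0), g a b

/-- The character `f_y`. -/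
noncomputable def discreteCharacter (p n : ℕ) (y : Fin n → ZMod p)
    (x : Fin n → ZMod p) : ℂ :=
  Complex.exp (2 * Real.pi * Complex.I * ((∑ i, x i * y i).val : ℂ) / p)

open Finset

lemma Module.Dual.natCard_ker_mul_natCard {K V : Type*} [Field K] [Finite K] [AddCommGroup V]
    [Module K V] [Module.Finite K V] {f : Module.Dual K V} (hf : f ≠ 0) :
    Nat.card (LinearMap.ker f) * Nat.card K = Nat.card V := by
  rw [Module.natCard_eq_pow_finrank (K := K), Module.natCard_eq_pow_finrank (K := K) (V := V),
    ← f.finrank_ker_add_one_of_ne_zero hf, pow_succ]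

section DotProduct

variable {K ι : Type*} [Field K] [Fintype K] [DecidableEq K] [Fintype ι] [DecidableEq ι]

lemma card_filter_dotProduct_eq_zero_mul_card {y : ι → K} (hy : y ≠ 0) :
    #{b : ι → K | b ⬝ᵥ y = 0} * Fintype.card K = Fintype.card K ^ Fintype.card ι := by
  have hker :
      Nat.card (LinearMap.ker (dotProductEquiv K ι y)) = #{b : ι → K | b ⬝ᵥ y = 0} := by
    rw [← Fintype.card_subtype, ← Nat.card_eq_fintype_card]
    exact Nat.card_congr (Equiv.subtypeEquivRight fun b => by simp [dotProduct_comm])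
  have h := Module.Dual.natCard_ker_mul_natCard (f := dotProductEquiv K ι y) (by simpa using hy)
  rwa [hker, Nat.card_eq_fintype_card (α := K), Nat.card_eq_fintype_card (α := ι → K),
    Fintype.card_fun] at h

lemma card_filter_ne_zero_dotProduct_eq_zero_add_one (y : ι → K) :
    #{b : ι → K | b ≠ 0 ∧ b ⬝ᵥ y = 0} + 1 =
      if y ≠ 0 then Fintype.card K ^ (Fintype.card ι - 1)
      else Fintype.card K ^ Fintype.card ι := by
  have herase :
      ({b : ι → K | b ≠ 0 ∧ b ⬝ᵥ y = 0} : Finset _) = ({b | b ⬝ᵥ y = 0} : Finset _).erase 0 := by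
    ext b
    simp [and_comm]
  rw [herase, card_erase_add_one (by simp)]
  split_ifs with hy
  · have h := card_filter_dotProduct_eq_zero_mul_card hy
    obtain ⟨i, -⟩ := Function.ne_iff.1 hy
    have hι : Fintype.card ι ≠ 0 := (Fintype.card_pos_iff.2 ⟨i⟩).ne'
    rw [← Nat.sub_one_add_one hι, pow_succ] at h
    exact Nat.eq_of_mul_eq_mul_right Fintype.card_pos h
  · simp [not_not.1 hy]

end DotProduct

lemma sum_range_natCast_eq_sum_zmod {M : Type*} [AddCommMonoid M] (p : ℕ) [NeZero p]
    (g : ZMod p → M) : ∑ j ∈ range p, g j = ∑ t : ZMod p, g t :=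
  sum_nbij' (fun j => (j : ZMod p)) ZMod.val (by simp) (by simp [ZMod.val_lt])
    (fun j hj => ZMod.val_cast_of_lt (mem_range.1 hj)) (fun t _ => ZMod.natCast_zmod_val t)
    (fun _ _ => rfl)

lemma discreteCharacter_eq_stdAddChar (p n : ℕ) [NeZero p] (y x : Fin n → ZMod p) :
    discreteCharacter p n y x = ZMod.stdAddChar (x ⬝ᵥ y) := by
  rw [ZMod.stdAddChar_apply, ZMod.toCircle_apply]
  rfl

lemma discreteRadon_addChar_dotProduct (p n : ℕ) [NeZero p] {ψ : AddChar (ZMod p) ℂ}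
    (hψ : ψ.IsPrimitive) (y a b : Fin n → ZMod p) :
    discreteRadon p n (fun x => ψ (x ⬝ᵥ y)) a b
      = (if b ⬝ᵥ y = 0 then 1 else 0) * ψ (a ⬝ᵥ y) := by
  have hshift (j : ℕ) :
      ψ ((a + j • b) ⬝ᵥ y) = ψ (a ⬝ᵥ y) * ψ ((j : ZMod p) * (b ⬝ᵥ y)) := by
    rw [add_dotProduct, smul_dotProduct, AddChar.map_add_eq_mul, nsmul_eq_mul]
  have hp : (p : ℂ) ≠ 0 := NeZero.ne _
  simp only [discreteRadon, hshift, ← mul_sum,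
    sum_range_natCast_eq_sum_zmod p (fun t => ψ (t * (b ⬝ᵥ y))), AddChar.sum_mulShift _ hψ,
    ZMod.card]
  split_ifs
  · field_simp
  · simp

theorem discreteRadon_eigenvalues (p n : ℕ) [Fact p.Prime] (hn : 1 ≤ n)
    (y : Fin n → ZMod p) :
    (discreteRadonConj p n (fun a b => discreteRadon p n (discreteCharacter p n y) a b))
      = (if y ≠ 0 then (((p : ℂ) ^ (n - 1) - 1) / ((p : ℂ) ^ n - 1)) else 1)
        • discreteCharacter p n y := by
  have hp : p.Prime := Fact.out
  have hdenom : (p : ℂ) ^ n - 1 ≠ 0 :=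
    sub_ne_zero.2 (by exact_mod_cast (Nat.one_lt_pow (by omega) hp.one_lt).ne')
  have hcount : (#{b : Fin n → ZMod p | b ≠ 0 ∧ b ⬝ᵥ y = 0} : ℂ)
      = (if y ≠ 0 then (p : ℂ) ^ (n - 1) else (p : ℂ) ^ n) - 1 := by
    rw [eq_sub_iff_add_eq]
    have h := card_filter_ne_zero_dotProduct_eq_zero_add_one y
    rw [ZMod.card, Fintype.card_fin] at h
    split_ifs at h ⊢ <;> exact_mod_cast h
  have hchar : discreteCharacter p n y = fun x => ZMod.stdAddChar (x ⬝ᵥ y) :=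
    funext (discreteCharacter_eq_stdAddChar p n y)
  funext a
  simp only [discreteRadonConj, hchar, discreteRadon_addChar_dotProduct p n
    (ZMod.isPrimitive_stdAddChar p), ← sum_mul, sum_boole, filter_filter, hcount, Pi.smul_apply,
    smul_eq_mul]
  split_ifs <;> field_simp
end

section
/- Let p be prime, n ≥ 1, and f : (Z/pZ)^n → C a function with mean zero (sum of f equals 0). Then the variance of the discrete Radon transform is bounded: (1/(p^n(p^n-1))) * sum over a in (Z/pZ)^n and nonzero b in (Z/pZ)^n of |(1/p) sum_{j=0}^{p-1} f(a+j·b)|^2 ≤ ((p^{n-1}-1)/(p^n-1)) * (1/p^n) * sum_x |f(x)|^2. -/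
/-!
Expanding the square, the energy of `f` along the lines of direction `b` is `p` times the sum of
the autocorrelation `c ↦ ∑ x, f x * conj (f (x + c))` over the line through `0` in direction `b`. Summing over
`b ≠ 0`, the point `0` of each line contributes `(p ^ n - 1) ‖f‖²`, every `c ≠ 0` lies on the
lines of the `p - 1` directions `t • c`, and the autocorrelation summed over all `c` is
`|∑ f|² = 0`, so its sum over `c ≠ 0` is `-‖f‖²`. Hence the bound holds with equality.
-/

open Finset ComplexConjugate

section Autocorrelation

variable {G R : Type*} [AddCommGroup G] [Fintype G] [CommRing R] [StarRing R]

def autocorrelation (f : G → R) (c : G) : R := ∑ x, f x * conj (f (x + c))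

theorem sum_mul_conj_add_eq_autocorrelation (f : G → R) (u v : G) :
    ∑ a, f (a + u) * conj (f (a + v)) = autocorrelation f (v - u) :=
  Fintype.sum_equiv (Equiv.addRight u) _ _ fun a => by
    simp only [Equiv.coe_addRight, add_add_sub_cancel]

theorem sum_autocorrelation (f : G → R) :
    ∑ c, autocorrelation f c = (∑ x, f x) * conj (∑ x, f x) := by
  simp only [autocorrelation, map_sum, sum_mul_sum]
  rw [sum_comm]
  refine sum_congr rfl fun x _ => ?_
  exact Fintype.sum_equiv (Equiv.addLeft x) _ _ fun c => rfl

variable {K : Type*} [Fintype K]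

theorem sum_lineSum_mul_conj [Ring K] [Module K G] (f : G → R) (b : G) :
    ∑ a, (∑ s : K, f (a + s • b)) * conj (∑ t : K, f (a + t • b)) =
      Fintype.card K * ∑ t : K, autocorrelation f (t • b) := by
  simp only [map_sum, sum_mul_sum]
  rw [sum_comm]
  have hshift (s : K) : ∑ t : K, autocorrelation f ((t - s) • b) =
      ∑ t : K, autocorrelation f (t • b) :=
    Fintype.sum_equiv (Equiv.subRight s) _ _ fun _ => rfl
  calc ∑ s : K, ∑ a, ∑ t : K, f (a + s • b) * conj (f (a + t • b))
      = ∑ s : K, ∑ t : K, autocorrelation f ((t - s) • b) := by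
        refine sum_congr rfl fun s _ => ?_
        rw [sum_comm]
        simp only [sum_mul_conj_add_eq_autocorrelation, sub_smul]
    _ = Fintype.card K * ∑ t : K, autocorrelation f (t • b) := by
        simp only [hshift, sum_const, card_univ, nsmul_eq_mul]

variable [DivisionRing K] [Module K G]

theorem sum_autocorrelation_smul_of_ne_zero (f : G → R) {t : K} (ht : t ≠ 0) :
    ∑ b, autocorrelation f (t • b) = ∑ b, autocorrelation f b :=
  Function.Bijective.sum_comp (MulAction.bijective₀ ht) _

theorem sum_sum_autocorrelation_smul (f : G → R) (hf : ∑ x, f x = 0) :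
    ∑ t : K, ∑ b, autocorrelation f (t • b) = Fintype.card G * autocorrelation f 0 := by
  rw [sum_eq_single (0 : K)]
  · simp [card_univ]
  · intro t _ ht
    rw [sum_autocorrelation_smul_of_ne_zero f ht, sum_autocorrelation, hf, zero_mul]
  · simp

theorem sum_ne_zero_sum_lineSum_mul_conj [DecidableEq G] (f : G → R) (hf : ∑ x, f x = 0) :
    ∑ b ∈ univ.filter (· ≠ 0), ∑ a, (∑ s : K, f (a + s • b)) * conj (∑ t : K, f (a + t • b)) =
      Fintype.card K * (Fintype.card G - Fintype.card K) * autocorrelation f 0 := by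
  simp only [sum_lineSum_mul_conj, ← mul_sum]
  rw [sum_comm, filter_ne']
  simp only [sum_erase_eq_sub (mem_univ _), smul_zero, sum_sub_distrib,
    sum_sum_autocorrelation_smul f hf, sum_const, card_univ, nsmul_eq_mul]
  ring

end Autocorrelation

theorem sum_ne_zero_sum_norm_sq_lineSum {G K 𝕜 : Type*} [AddCommGroup G] [Fintype G]
    [DecidableEq G] [DivisionRing K] [Fintype K] [Module K G] [RCLike 𝕜] (f : G → 𝕜)
    (hf : ∑ x, f x = 0) :
    ∑ b ∈ univ.filter (· ≠ 0), ∑ a, ‖∑ t : K, f (a + t • b)‖ ^ 2 =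
      Fintype.card K * (Fintype.card G - Fintype.card K) * ∑ x, ‖f x‖ ^ 2 := by
  apply RCLike.ofReal_injective (K := 𝕜)
  have h := sum_ne_zero_sum_lineSum_mul_conj (K := K) f hf
  simp only [RCLike.mul_conj, autocorrelation, add_zero] at h
  push_cast
  exact h

theorem sum_range_nsmul_eq_sum_zmod_smul {p : ℕ} [NeZero p] {M N : Type*} [AddCommGroup M]
    [Module (ZMod p) M] [AddCommMonoid N] (g : M → N) (b : M) :
    ∑ j ∈ range p, g (j • b) = ∑ t : ZMod p, g (t • b) :=
  sum_nbij' (↑) ZMod.val (fun _ _ => mem_univ _) (fun t _ => mem_range.2 t.val_lt)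
    (fun _ hj => ZMod.val_cast_of_lt (mem_range.1 hj)) (fun t _ => ZMod.natCast_zmod_val t)
    fun j _ => by rw [Nat.cast_smul_eq_nsmul]

theorem discreteRadon_variance_bound_general (p n : ℕ) [Fact p.Prime]
    (f : (Fin n → ZMod p) → ℂ) (hmean : ∑ x, f x = 0) :
    (1 / ((p : ℝ) ^ n * ((p : ℝ) ^ n - 1))) *
        ∑ a : Fin n → ZMod p,
          ∑ b ∈ Finset.univ.filter (fun b : Fin n → ZMod p => b ≠ 0),
            ‖(1 / (p : ℂ)) * ∑ j ∈ Finset.range p, f (a + j • b)‖ ^ 2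
      ≤ (((p : ℝ) ^ (n - 1) - 1) / ((p : ℝ) ^ n - 1)) *
        ((1 / (p : ℝ) ^ n) * ∑ x, ‖f x‖ ^ 2) := by
  have hlines : ∑ a : Fin n → ZMod p, ∑ b ∈ univ.filter (fun b : Fin n → ZMod p => b ≠ 0),
      ‖(1 / (p : ℂ)) * ∑ j ∈ range p, f (a + j • b)‖ ^ 2 =
        (1 / p) ^ 2 * (p * (p ^ n - p) * ∑ x, ‖f x‖ ^ 2) := by
    have hrange (a b : Fin n → ZMod p) :
        ∑ j ∈ range p, f (a + j • b) = ∑ t : ZMod p, f (a + t • b) :=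
      sum_range_nsmul_eq_sum_zmod_smul (fun y => f (a + y)) b
    simp_rw [hrange, norm_mul, mul_pow, ← mul_sum]
    rw [sum_comm, sum_ne_zero_sum_norm_sq_lineSum f hmean]
    simp [ZMod.card]
  rw [hlines]
  refine le_of_eq ?_
  rcases n with _ | n
  · simp -- both sides are divided by `p ^ 0 - 1 = 0`
  · have hp : (p : ℝ) ≠ 0 := Nat.cast_ne_zero.2 (Fact.out : p.Prime).ne_zero
    rw [Nat.add_sub_cancel]
    field_simp
    ring

theorem discreteRadon_variance_bound (p n : ℕ) [Fact p.Prime] (hn : 1 ≤ n)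
    (f : (Fin n → ZMod p) → ℂ) (hmean : ∑ x, f x = 0) :
    (1 / ((p : ℝ) ^ n * ((p : ℝ) ^ n - 1))) *
        ∑ a : Fin n → ZMod p,
          ∑ b ∈ Finset.univ.filter (fun b : Fin n → ZMod p => b ≠ 0),
            ‖(1 / (p : ℂ)) * ∑ j ∈ Finset.range p, f (a + j • b)‖ ^ 2
      ≤ (((p : ℝ) ^ (n - 1) - 1) / ((p : ℝ) ^ n - 1)) *
        ((1 / (p : ℝ) ^ n) * ∑ x, ‖f x‖ ^ 2) :=
  discreteRadon_variance_bound_general p n f hmean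
end

section
/- For even k with 2 ≤ k ≤ n, the eigenvalue of S_k = R_k* R_k on spherical harmonics of degree 2 equals λ_{k,2}² = (n−k)/(k(n−1)). -/
open Real MeasureTheory Set intervalIntegral Finset

-- Gamma induction
lemma my_gamma_key (m : ℕ) :
    Real.Gamma ((m:ℝ)+1) * (π * ∏ i ∈ Finset.range m, (2*(i:ℝ)+1)/(2*(i:ℝ)+2))
      = Real.sqrt π * Real.Gamma ((m:ℝ)+1/2) := by
  induction m with
  | zero =>
      simp only [Nat.cast_zero, zero_add, Real.Gamma_one, Finset.range_zero, Finset.prod_empty,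
        mul_one, one_mul, Real.Gamma_one_half_eq]
      exact (Real.mul_self_sqrt Real.pi_pos.le).symm
  | succ m ih =>
      have h1 : ((m:ℝ)+1) ≠ 0 := by positivity
      have h2 : ((m:ℝ)+1/2) ≠ 0 := by positivity
      have e1 : Real.Gamma ((m+1:ℕ):ℝ) = Real.Gamma ((m:ℝ)+1) := by push_cast; ring_nf
      have e2 : Real.Gamma (((m+1:ℕ)):ℝ) = Real.Gamma ((m:ℝ)+1) := e1
      have g1 : Real.Gamma (((m:ℝ)+1)+1) = ((m:ℝ)+1) * Real.Gamma ((m:ℝ)+1) :=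
        Real.Gamma_add_one h1
      have g2 : Real.Gamma (((m:ℝ)+1/2)+1) = ((m:ℝ)+1/2) * Real.Gamma ((m:ℝ)+1/2) :=
        Real.Gamma_add_one h2
      have hc1 : ((m+1:ℕ):ℝ)+1 = ((m:ℝ)+1)+1 := by push_cast; ring
      have hc2 : ((m+1:ℕ):ℝ)+1/2 = ((m:ℝ)+1/2)+1 := by push_cast; ring
      rw [hc1, hc2, g1, g2, Finset.prod_range_succ]
      have h3 : (2*(m:ℝ)+2) ≠ 0 := by positivity
      have hfact : ((m:ℝ)+1) * ((2*(m:ℝ)+1)/(2*(m:ℝ)+2)) = (m:ℝ)+1/2 := by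
        field_simp
      calc ((m:ℝ)+1) * Real.Gamma ((m:ℝ)+1) *
            (π * ((∏ i ∈ Finset.range m, (2*(i:ℝ)+1)/(2*(i:ℝ)+2)) * ((2*(m:ℝ)+1)/(2*(m:ℝ)+2))))
          = (((m:ℝ)+1) * ((2*(m:ℝ)+1)/(2*(m:ℝ)+2))) *
            (Real.Gamma ((m:ℝ)+1) * (π * ∏ i ∈ Finset.range m, (2*(i:ℝ)+1)/(2*(i:ℝ)+2))) := by
            ring
        _ = ((m:ℝ)+1/2) * (Real.sqrt π * Real.Gamma ((m:ℝ)+1/2)) := by rw [hfact, ih]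
        _ = Real.sqrt π * (((m:ℝ)+1/2) * Real.Gamma ((m:ℝ)+1/2)) := by ring

lemma my_cm_val (m : ℕ) :
    (∫ x in (-(π/2))..(π/2), Real.cos x ^ (2*m))
      = π * ∏ i ∈ Finset.range m, (2*(i:ℝ)+1)/(2*(i:ℝ)+2) := by
  have h1 : (∫ x in (0:ℝ)..π, Real.cos (x - π/2) ^ (2*m))
      = ∫ x in ((0:ℝ) - π/2)..(π - π/2), Real.cos x ^ (2*m) :=
    intervalIntegral.integral_comp_sub_right (fun y => Real.cos y ^ (2*m)) (π/2)
  have h2 : ∀ x : ℝ, Real.cos (x - π/2) = Real.sin x := by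
    intro x
    rw [show x - π/2 = -(π/2 - x) by ring, Real.cos_neg, Real.cos_pi_div_two_sub]
  have h3 : (0:ℝ) - π/2 = -(π/2) := by ring
  have h4 : π - π/2 = π/2 := by ring
  rw [h3, h4] at h1
  rw [← h1]
  simp only [h2]
  exact integral_sin_pow_even m

lemma my_cos_int (n m : ℕ) :
    (∫ x in (-(π/2))..(π/2), ((n:ℝ) * Real.sin x ^ 2 - 1) * Real.cos x ^ (2*m))
      = ((n:ℝ)/(2*(m:ℝ)+2) - 1) * ∫ x in (-(π/2))..(π/2), Real.cos x ^ (2*m) := by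
  have h1 : ∀ x : ℝ, ((n:ℝ) * Real.sin x ^ 2 - 1) * Real.cos x ^ (2*m)
      = (n:ℝ) * (Real.cos x ^ (2*m) - Real.cos x ^ (2*m+2)) - Real.cos x ^ (2*m) := by
    intro x
    rw [Real.sin_sq]
    ring
  simp only [h1]
  have i1 : IntervalIntegrable (fun x => Real.cos x ^ (2*m)) volume (-(π/2)) (π/2) := by
    apply Continuous.intervalIntegrable; fun_prop
  have i2 : IntervalIntegrable (fun x => Real.cos x ^ (2*m+2)) volume (-(π/2)) (π/2) := by
    apply Continuous.intervalIntegrable; fun_prop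
  rw [intervalIntegral.integral_sub ((i1.sub i2).const_mul _) i1,
    intervalIntegral.integral_const_mul, intervalIntegral.integral_sub i1 i2]
  have h2 : (∫ x in (-(π/2))..(π/2), Real.cos x ^ (2*m+2))
      = (2*(m:ℝ)+1)/(2*(m:ℝ)+2) * ∫ x in (-(π/2))..(π/2), Real.cos x ^ (2*m) := by
    have := integral_cos_pow (a := -(π/2)) (b := π/2) (n := 2*m)
    simp only [Real.cos_pi_div_two, Real.cos_neg] at this
    rw [this]
    have hc : ((2*m:ℕ):ℝ) = 2*(m:ℝ) := by push_cast; ring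
    simp [zero_pow, hc]
  rw [h2]
  have h3 : (2*(m:ℝ)+2) ≠ 0 := by positivity
  field_simp
  ring

lemma my_subst (n m : ℕ) :
    (∫ t in (-1:ℝ)..1, ((n:ℝ)*t^2 - 1) * (1 - t^2) ^ ((m:ℝ) - 1/2))
      = ∫ x in (-(π/2))..(π/2), ((n:ℝ) * Real.sin x ^ 2 - 1) * Real.cos x ^ (2*m) := by
  have hab : -(π/2) ≤ π/2 := by linarith [Real.pi_pos]
  have hmin : min (-(π/2)) (π/2) = -(π/2) := min_eq_left hab
  have hmax : max (-(π/2)) (π/2) = π/2 := max_eq_right hab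
  set e : ℝ := (m:ℝ) - 1/2 with hedef
  have hee : -(1/2 : ℝ) ≤ e := by
    have : (0:ℝ) ≤ m := Nat.cast_nonneg m
    simp only [hedef]; linarith
  have he : e ≠ 0 := by
    simp only [hedef, sub_ne_zero]
    intro h
    have : (2:ℝ) * m = 1 := by linarith
    have : (2 * m : ℕ) = 1 := by exact_mod_cast this
    omega
  set g : ℝ → ℝ := fun t => ((n:ℝ)*t^2 - 1) * (1 - t^2) ^ e with hgdef
  -- pointwise identity on the open interval
  have hpt : ∀ x ∈ Ioo (-(π/2)) (π/2),
      Real.cos x • g (Real.sin x) = ((n:ℝ) * Real.sin x ^ 2 - 1) * Real.cos x ^ (2*m) := by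
    intro x hx
    have hc : 0 < Real.cos x := Real.cos_pos_of_mem_Ioo hx
    have h1 : (1 : ℝ) - Real.sin x ^ 2 = Real.cos x ^ 2 := by
      rw [Real.sin_sq]; ring
    have e1 : ((Real.cos x)^2 : ℝ) ^ e = Real.cos x ^ (2*e) := by
      rw [← Real.rpow_natCast (Real.cos x) 2, ← Real.rpow_mul hc.le]
      norm_num
    have e3 : 2*e + 1 = ((2*m : ℕ):ℝ) := by
      simp only [hedef]; push_cast; ring
    simp only [hgdef, smul_eq_mul, h1, e1]
    rw [show Real.cos x * (((n:ℝ)*Real.sin x^2 - 1) * Real.cos x ^ (2*e))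
        = ((n:ℝ)*Real.sin x^2 - 1) * (Real.cos x ^ (2*e) * Real.cos x) from by ring]
    rw [← Real.rpow_add_one hc.ne', e3, Real.rpow_natCast]
  -- ae statements
  have hnull : ∀ᵐ x : ℝ ∂volume, x ∉ ({-(π/2), π/2} : Set ℝ) :=
    (((Set.finite_singleton (π/2)).insert (-(π/2))).countable).ae_notMem volume
  -- continuity of g on the open interval
  have hgc : ContinuousOn g (Ioo (-1:ℝ) 1) := by
    intro t ht
    have hne : (1:ℝ) - t^2 ≠ 0 := by nlinarith [ht.1, ht.2]
    apply ContinuousAt.continuousWithinAt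
    apply ContinuousAt.mul (by fun_prop)
    exact ContinuousAt.rpow_const (by fun_prop) (Or.inl hne)
  -- image facts
  have himg1 : Real.sin '' Ioo (-(π/2)) (π/2) ⊆ Ioo (-1:ℝ) 1 := by
    rintro _ ⟨x, hx, rfl⟩
    constructor
    · have := Real.sin_lt_sin_of_lt_of_le_pi_div_two (le_refl (-(π/2))) (le_of_lt hx.2) hx.1
      simpa using this
    · have := Real.sin_lt_sin_of_lt_of_le_pi_div_two (le_of_lt hx.1) (le_refl (π/2)) hx.2
      simpa using this
  have himg2 : Real.sin '' (Set.uIcc (-(π/2)) (π/2)) ⊆ Icc (-1:ℝ) 1 := by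
    rintro _ ⟨x, _, rfl⟩
    exact ⟨Real.neg_one_le_sin x, Real.sin_le_one x⟩
  -- integrability of g on Icc (-1) 1
  have hgint : IntegrableOn g (Icc (-1:ℝ) 1) := by
    have ib1 : IntervalIntegrable (fun t:ℝ => (1-t) ^ (-(1/2):ℝ)) volume (-1) 1 := by
      have h := (intervalIntegrable_rpow' (a := 2) (b := 0)
        (show (-1:ℝ) < -(1/2) by norm_num)).comp_sub_left 1
      norm_num at h
      exact h
    have ib2 : IntervalIntegrable (fun t:ℝ => (1+t) ^ (-(1/2):ℝ)) volume (-1) 1 := by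
      have h := (intervalIntegrable_rpow' (a := 0) (b := 2)
        (show (-1:ℝ) < -(1/2) by norm_num)).comp_add_right 1
      norm_num at h
      simpa [add_comm] using h
    have iB : IntervalIntegrable
        (fun t:ℝ => ((n:ℝ)+1) * ((1-t) ^ (-(1/2):ℝ) + (1+t) ^ (-(1/2):ℝ))) volume (-1) 1 :=
      (ib1.add ib2).const_mul _
    have hB : IntegrableOn
        (fun t:ℝ => ((n:ℝ)+1) * ((1-t) ^ (-(1/2):ℝ) + (1+t) ^ (-(1/2):ℝ))) (Icc (-1:ℝ) 1) :=
      (intervalIntegrable_iff_integrableOn_Icc_of_le (by norm_num)).mp iB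
    apply Integrable.mono' hB
    · apply Measurable.aestronglyMeasurable
      fun_prop
    · rw [ae_restrict_iff' measurableSet_Icc]
      refine MeasureTheory.ae_of_all _ fun t ht => ?_
      have ht1 : -1 ≤ t := ht.1
      have ht2 : t ≤ 1 := ht.2
      have hsq : t^2 ≤ 1 := by nlinarith
      have h1t : (0:ℝ) ≤ 1 - t := by linarith
      have h1t' : (0:ℝ) ≤ 1 + t := by linarith
      have habs : |((n:ℝ)*t^2 - 1)| ≤ (n:ℝ)+1 := by
        rw [abs_le]
        constructor <;> nlinarith [Nat.cast_nonneg (α := ℝ) n, sq_nonneg t]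
      have hw : ((1:ℝ) - t^2) ^ e ≤ (1-t) ^ (-(1/2):ℝ) + (1+t) ^ (-(1/2):ℝ) := by
        rcases eq_or_lt_of_le (show (0:ℝ) ≤ 1 - t^2 by nlinarith) with h0 | h0
        · rw [← h0, Real.zero_rpow he]
          positivity
        · have step1 : ((1:ℝ) - t^2) ^ e ≤ (1 - t^2) ^ (-(1/2):ℝ) :=
            Real.rpow_le_rpow_of_exponent_ge h0 (by nlinarith) hee
        
          rcases le_or_gt 0 t with htpos | htneg
          · have hlt : (0:ℝ) < 1 - t := by nlinarith
            have hle : 1 - t ≤ 1 - t^2 := by nlinarith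
            have step2 : ((1:ℝ) - t^2) ^ (-(1/2):ℝ) ≤ (1-t) ^ (-(1/2):ℝ) :=
              Real.rpow_le_rpow_of_nonpos hlt hle (by norm_num)
            have : (0:ℝ) ≤ (1+t) ^ (-(1/2):ℝ) := Real.rpow_nonneg h1t' _
            linarith
          · have hlt : (0:ℝ) < 1 + t := by nlinarith
            have hle : 1 + t ≤ 1 - t^2 := by nlinarith
            have step2 : ((1:ℝ) - t^2) ^ (-(1/2):ℝ) ≤ (1+t) ^ (-(1/2):ℝ) :=
              Real.rpow_le_rpow_of_nonpos hlt hle (by norm_num)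
            have : (0:ℝ) ≤ (1-t) ^ (-(1/2):ℝ) := Real.rpow_nonneg h1t _
            linarith
      have hwnn : (0:ℝ) ≤ ((1:ℝ) - t^2) ^ e := Real.rpow_nonneg (by nlinarith) _
      calc ‖g t‖ = |((n:ℝ)*t^2 - 1)| * (((1:ℝ) - t^2) ^ e) := by
            simp only [hgdef, Real.norm_eq_abs, abs_mul, abs_of_nonneg hwnn]
        _ ≤ ((n:ℝ)+1) * ((1-t) ^ (-(1/2):ℝ) + (1+t) ^ (-(1/2):ℝ)) := by
            apply mul_le_mul habs hw hwnn
            positivity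
  -- the substitution
  have key : (∫ x in (-(π/2))..(π/2), Real.cos x • g (Real.sin x)) = ∫ u in (-1:ℝ)..1, g u := by
    have h := intervalIntegral.integral_comp_smul_deriv''' (a := -(π/2)) (b := π/2)
      (f := Real.sin) (f' := Real.cos) (g := g)
      (Real.continuous_sin.continuousOn)
      (by rw [hmin, hmax]; exact fun x _ => (Real.hasDerivAt_sin x).hasDerivWithinAt)
      (by rw [hmin, hmax]; exact hgc.mono himg1)
      (hgint.mono_set himg2)
      ?_
    · simpa [Function.comp, Real.sin_pi_div_two, Real.sin_neg] using h
    · rw [uIcc_of_le hab]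
      have hcont : Continuous fun x => ((n:ℝ) * Real.sin x ^ 2 - 1) * Real.cos x ^ (2*m) := by
        fun_prop
      apply (hcont.integrableOn_Icc).congr
      filter_upwards [ae_restrict_of_ae hnull, ae_restrict_mem measurableSet_Icc]
        with x hx1 hx2
      simp only [Set.mem_insert_iff, Set.mem_singleton_iff, not_or] at hx1
      have hxIoo : x ∈ Ioo (-(π/2)) (π/2) :=
        ⟨lt_of_le_of_ne hx2.1 (Ne.symm hx1.1), lt_of_le_of_ne hx2.2 hx1.2⟩
      exact (hpt x hxIoo).symm
  have key2 : (∫ x in (-(π/2))..(π/2), Real.cos x • g (Real.sin x))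
      = ∫ x in (-(π/2))..(π/2), ((n:ℝ) * Real.sin x ^ 2 - 1) * Real.cos x ^ (2*m) := by
    apply intervalIntegral.integral_congr_ae
    filter_upwards [hnull] with x hx1 hx2
    simp only [Set.mem_insert_iff, Set.mem_singleton_iff, not_or] at hx1
    rw [uIoc_of_le hab] at hx2
    exact hpt x ⟨hx2.1, lt_of_le_of_ne hx2.2 hx1.2⟩
  rw [← key2, key]

theorem degree_two_eigenvalue_even_k (n k : ℕ) (hk : Even k) (hk2 : 2 ≤ k)
    (hkn : k ≤ n) (hn : 3 ≤ n) :
    (Real.Gamma ((k : ℝ) / 2) / (Real.sqrt Real.pi * Real.Gamma (((k : ℝ) - 1) / 2))) *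
        (∫ t in (-1 : ℝ)..1,
          (((n - 1).choose 2 : ℝ) * ((n : ℝ) * t ^ 2 - 1) / ((n : ℝ) - 1)) *
            (1 - t ^ 2) ^ (((k : ℝ) - 3) / 2)) /
        ((n - 1).choose 2 : ℝ)
      = ((n : ℝ) - k) / (k * ((n : ℝ) - 1)) := by
  obtain ⟨j, hj⟩ := hk
  have hm : k = 2*(j-1)+2 := by omega
  set m : ℕ := j - 1 with hmdef
  have hkR : (k:ℝ) = 2*(m:ℝ)+2 := by rw [hm]; push_cast; ring
  have hx1 : ((k:ℝ))/2 = (m:ℝ)+1 := by rw [hkR]; ring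
  have hx2 : ((k:ℝ)-1)/2 = (m:ℝ)+1/2 := by rw [hkR]; ring
  have hx3 : ((k:ℝ)-3)/2 = (m:ℝ)-1/2 := by rw [hkR]; ring
  have hnR : (3:ℝ) ≤ (n:ℝ) := by exact_mod_cast hn
  have hC : (0:ℝ) < ((n-1).choose 2 : ℝ) := by
    have : 0 < (n-1).choose 2 := Nat.choose_pos (by omega)
    exact_mod_cast this
  have hG1 : 0 < Real.Gamma ((m:ℝ)+1) := Real.Gamma_pos_of_pos (by positivity)
  have hG2 : 0 < Real.Gamma ((m:ℝ)+1/2) := Real.Gamma_pos_of_pos (by positivity)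
  have hs : 0 < Real.sqrt π := Real.sqrt_pos.mpr Real.pi_pos
  have hN1 : ((n:ℝ)-1) ≠ 0 := by linarith
  have hK : (2*(m:ℝ)+2) ≠ 0 := by positivity
  have hPm : π * ∏ i ∈ Finset.range m, (2*(i:ℝ)+1)/(2*(i:ℝ)+2)
      = Real.sqrt π * Real.Gamma ((m:ℝ)+1/2) / Real.Gamma ((m:ℝ)+1) := by
    rw [eq_div_iff hG1.ne']
    linarith [my_gamma_key m]
  have hint : ∀ t:ℝ, (((n-1).choose 2 : ℝ) * ((n:ℝ)*t^2 - 1) / ((n:ℝ)-1)) *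
      (1-t^2)^((m:ℝ)-1/2)
      = (((n-1).choose 2 : ℝ)/((n:ℝ)-1)) * (((n:ℝ)*t^2-1) * (1-t^2)^((m:ℝ)-1/2)) :=
    fun t => by ring
  rw [hx1, hx2]
  simp only [hx3, hint]
  rw [intervalIntegral.integral_const_mul, my_subst n m, my_cos_int n m, my_cm_val m, hPm, hkR]
  field_simp
end

section
/- For n ≥ 3 and k = 2, the integral τ_2 ∫_0^π P_{2ℓ}(cos θ) dθ equals C(ℓ + n/2 − 2, ℓ)², where τ_2 = 1/π and P_{2ℓ} is the Gegenbauer (ultraspherical) polynomial of degree 2ℓ associated to the weight (1−t²)^{(n−3)/2}, normalized so that P_{2ℓ}(1) = C(2ℓ + n − 3, 2ℓ). Consequently the eigenvalue of S_2 on spherical harmonics of degree 2ℓ is λ_{2,2ℓ}² = C(ℓ + n/2 − 2, ℓ)² / C(2ℓ + n − 3, 2ℓ). -/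
/-!
Put `x = cos θ`. The three-term recurrence for `C_m^{(λ)}` together with
`2 cos θ cos φ = cos (φ + θ) + cos (φ - θ)` gives the Fourier expansion
`C_m^{(λ)}(cos θ) = ∑_{i + j = m} c_i c_j cos ((i - j) θ)` with `c_k = (λ)_k / k!`: the
coefficient identity the recurrence requires is a polynomial consequence of
`(k + 1) c_{k+1} = (k + λ) c_k`. Over `[0, π]` every frequency `i ≠ j` integrates to zero, so for
`m = 2ℓ` only `π c_ℓ²` survives, and `c_ℓ = C(ℓ + λ - 1, ℓ)` by `Γ(s + 1) = s Γ(s)`. The weighted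
integral over `[-1, 1]` is the same integral after the substitution `t = cos θ`.
-/

/-- The Gegenbauer (ultraspherical) polynomial `C_m^{(lam)}`, defined by the
standard three-term recurrence, normalized so that
`C_m^{(lam)}(1) = C(m + 2*lam - 1, m)`. -/
noncomputable def gegenbauer (lam : ℝ) : ℕ → ℝ → ℝ
  | 0 => fun _ => 1
  | 1 => fun x => 2 * lam * x
  | (m + 2) => fun x =>
      (2 * ((m : ℝ) + 1 + lam) * x * gegenbauer lam (m + 1) x
        - ((m : ℝ) + 2 * lam) * gegenbauer lam m x) / ((m : ℝ) + 2)

/-- Generalized binomial coefficient `C(x, m)` defined via the Gamma function. -/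
noncomputable def genBinom (x : ℝ) (m : ℕ) : ℝ :=
  Real.Gamma (x + 1) / (Real.Gamma ((m : ℝ) + 1) * Real.Gamma (x - m + 1))

open Real MeasureTheory Finset Finset.Nat

noncomputable def gegenbauerCoeff (lam : ℝ) : ℕ → ℝ
  | 0 => 1
  | k + 1 => gegenbauerCoeff lam k * (k + lam) / (k + 1)

theorem succ_mul_gegenbauerCoeff_succ (lam : ℝ) (k : ℕ) :
    ((k : ℝ) + 1) * gegenbauerCoeff lam (k + 1) = (k + lam) * gegenbauerCoeff lam k := by
  rw [gegenbauerCoeff]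
  field_simp

theorem gegenbauerCoeff_mul_gegenbauerCoeff_recurrence (lam : ℝ) (i j : ℕ) :
    ((i : ℝ) + j + 2) * (gegenbauerCoeff lam (i + 1) * gegenbauerCoeff lam (j + 1)) =
      (i + j + 1 + lam) * (gegenbauerCoeff lam i * gegenbauerCoeff lam (j + 1) +
          gegenbauerCoeff lam (i + 1) * gegenbauerCoeff lam j) -
        (i + j + 2 * lam) * (gegenbauerCoeff lam i * gegenbauerCoeff lam j) := by
  linear_combination
    (gegenbauerCoeff lam (j + 1) - gegenbauerCoeff lam j) * succ_mul_gegenbauerCoeff_succ lam i +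
    (gegenbauerCoeff lam (i + 1) - gegenbauerCoeff lam i) * succ_mul_gegenbauerCoeff_succ lam j

theorem gegenbauerCoeff_eq_genBinom {lam : ℝ} (hlam : 0 < lam) (k : ℕ) :
    gegenbauerCoeff lam k = genBinom (k + lam - 1) k := by
  rw [genBinom, show (k : ℝ) + lam - 1 + 1 = k + lam by ring,
    show (k : ℝ) + lam - 1 - k + 1 = lam by ring]
  induction k with
  | zero => simp [gegenbauerCoeff, (Real.Gamma_pos_of_pos hlam).ne']
  | succ k ih =>
    rw [gegenbauerCoeff, ih]
    push_cast
    rw [show (k : ℝ) + 1 + lam = k + lam + 1 by ring,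
      Real.Gamma_add_one (s := k + lam) (by positivity),
      Real.Gamma_add_one (s := k + 1) (by positivity)]
    field_simp

section CosineSums

variable (f : ℕ × ℕ → ℝ) (m : ℕ) (θ : ℝ)

theorem two_mul_cos_mul_sum_antidiagonal_succ :
    2 * cos θ * ∑ p ∈ antidiagonal (m + 1), f p * cos (((p.1 : ℝ) - p.2) * θ) =
      (f (m + 1, 0) + f (0, m + 1)) * cos ((m + 2) * θ) +
        ∑ p ∈ antidiagonal m,
          (f (p.1, p.2 + 1) + f (p.1 + 1, p.2)) * cos (((p.1 : ℝ) - p.2) * θ) := by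
  have two_cos_mul_cos (φ : ℝ) : 2 * cos θ * cos φ = cos (φ + θ) + cos (φ - θ) := by
    rw [cos_add, cos_sub]; ring
  calc _ = ∑ p ∈ antidiagonal (m + 1), f p * cos (((p.1 : ℝ) - p.2) * θ + θ) +
        ∑ p ∈ antidiagonal (m + 1), f p * cos (((p.1 : ℝ) - p.2) * θ - θ) := by
        rw [mul_sum, ← sum_add_distrib]
        refine sum_congr rfl fun p _ => ?_
        rw [mul_left_comm, two_cos_mul_cos]; ring
    _ = _ := by
        have hneg : cos ((((0 : ℕ) : ℝ) - (m + 1 : ℕ)) * θ - θ) = cos ((m + 2) * θ) := by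
          rw [← cos_neg]; push_cast; ring_nf
        rw [sum_antidiagonal_succ', sum_antidiagonal_succ]
        dsimp only
        rw [hneg]
        push_cast
        simp only [add_mul, sum_add_distrib]
        ring_nf

theorem sum_antidiagonal_add_two_mul_cos :
    ∑ p ∈ antidiagonal (m + 2), f p * cos (((p.1 : ℝ) - p.2) * θ) =
      (f (m + 2, 0) + f (0, m + 2)) * cos ((m + 2) * θ) +
        ∑ p ∈ antidiagonal m, f (p.1 + 1, p.2 + 1) * cos (((p.1 : ℝ) - p.2) * θ) := by
  have hneg : cos ((((0 : ℕ) : ℝ) - (m + 2 : ℕ)) * θ) = cos ((m + 2) * θ) := by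
    rw [← cos_neg]; push_cast; ring_nf
  rw [sum_antidiagonal_succ, sum_antidiagonal_succ']
  dsimp only
  rw [hneg]
  push_cast
  ring_nf

end CosineSums

theorem gegenbauer_cos_eq_sum_antidiagonal (lam θ : ℝ) : ∀ m : ℕ,
    gegenbauer lam m (cos θ) = ∑ p ∈ antidiagonal m,
      gegenbauerCoeff lam p.1 * gegenbauerCoeff lam p.2 * cos (((p.1 : ℝ) - p.2) * θ)
  | 0 => by simp [gegenbauer, gegenbauerCoeff]
  | 1 => by
    simp [gegenbauer, gegenbauerCoeff, sum_antidiagonal_succ]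
    ring
  | m + 2 => by
    have hcm := succ_mul_gegenbauerCoeff_succ lam (m + 1)
    set c := gegenbauerCoeff lam
    have hc0 : c 0 = 1 := rfl
    have hcos := two_mul_cos_mul_sum_antidiagonal_succ (fun p => c p.1 * c p.2) m θ
    have hshift := sum_antidiagonal_add_two_mul_cos (fun p => c p.1 * c p.2) m θ
    simp only [hc0] at hcos hshift
    have hsum : ((m : ℝ) + 2) * ∑ p ∈ antidiagonal m,
          c (p.1 + 1) * c (p.2 + 1) * cos (((p.1 : ℝ) - p.2) * θ) =
        (m + 1 + lam) * ∑ p ∈ antidiagonal m,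
            (c p.1 * c (p.2 + 1) + c (p.1 + 1) * c p.2) * cos (((p.1 : ℝ) - p.2) * θ) -
          (m + 2 * lam) *
            ∑ p ∈ antidiagonal m, c p.1 * c p.2 * cos (((p.1 : ℝ) - p.2) * θ) := by
      rw [mul_sum, mul_sum, mul_sum, ← sum_sub_distrib]
      refine sum_congr rfl fun p hp => ?_
      rw [← mem_antidiagonal.mp hp]
      push_cast
      linear_combination cos (((p.1 : ℝ) - p.2) * θ) *
        gegenbauerCoeff_mul_gegenbauerCoeff_recurrence lam p.1 p.2
    rw [gegenbauer]
    dsimp only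
    rw [gegenbauer_cos_eq_sum_antidiagonal lam θ (m + 1),
      gegenbauer_cos_eq_sum_antidiagonal lam θ m, hshift, div_eq_iff (by positivity)]
    push_cast at hcm
    linear_combination (m + 1 + lam) * hcos - hsum - 2 * cos ((m + 2) * θ) * hcm

theorem integral_cos_natCast_sub_mul (i j : ℕ) :
    ∫ θ in (0 : ℝ)..π, cos (((i : ℝ) - j) * θ) = if i = j then π else 0 := by
  split_ifs with hij
  · simp [hij]
  · have hk : ((i : ℤ) - j : ℤ) ≠ 0 := by omega
    have hcast : ((i : ℝ) - j) = (((i : ℤ) - j : ℤ) : ℝ) := by push_cast; ring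
    rw [hcast, intervalIntegral.integral_comp_mul_left (fun x => cos x) (by exact_mod_cast hk)]
    simp only [integral_cos, sin_int_mul_pi, mul_zero, sin_zero, sub_zero, smul_zero]

theorem integral_gegenbauer_cos (lam : ℝ) (ℓ : ℕ) :
    ∫ θ in (0 : ℝ)..π, gegenbauer lam (2 * ℓ) (cos θ) =
      π * gegenbauerCoeff lam ℓ ^ 2 := by
  simp_rw [gegenbauer_cos_eq_sum_antidiagonal]
  rw [intervalIntegral.integral_finsetSum fun p _ => by
    apply Continuous.intervalIntegrable; fun_prop]
  simp_rw [intervalIntegral.integral_const_mul, integral_cos_natCast_sub_mul]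
  rw [sum_eq_single (ℓ, ℓ)]
  · simp only [if_true]; ring
  · intro p hp hne
    rw [HasAntidiagonal.mem_antidiagonal] at hp
    rw [if_neg fun h => hne (Prod.ext (by omega) (by omega)), mul_zero]
  · simp [two_mul]

theorem integral_mul_one_sub_sq_rpow_neg_half_eq_integral_comp_cos (P : ℝ → ℝ) :
    ∫ t in (-1 : ℝ)..1, P t * (1 - t ^ 2) ^ (-(1 : ℝ) / 2) = ∫ θ in (0 : ℝ)..π, P (cos θ) := by
  have hweight : ∀ θ ∈ Set.Ioo 0 π,
      |-sin θ| • (P (cos θ) * (1 - cos θ ^ 2) ^ (-(1 : ℝ) / 2)) = P (cos θ) := by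
    intro θ hθ
    have hs : 0 < sin θ := sin_pos_of_pos_of_lt_pi hθ.1 hθ.2
    rw [← sin_sq, ← rpow_natCast, ← rpow_mul hs.le, abs_neg, abs_of_pos hs, smul_eq_mul]
    norm_num [rpow_neg_one]
    field_simp
  rw [intervalIntegral.integral_of_le (by norm_num), intervalIntegral.integral_of_le pi_pos.le,
    ← integral_Icc_eq_integral_Ioc, ← bijOn_cos.image_eq,
    integral_image_eq_integral_abs_deriv_smul measurableSet_Icc
      (fun θ _ => (hasDerivAt_cos θ).hasDerivWithinAt) injOn_cos,
    integral_Icc_eq_integral_Ioo, integral_Ioc_eq_integral_Ioo]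
  exact setIntegral_congr_fun measurableSet_Ioo hweight

theorem gegenbauer_circle_average (n : ℕ) (hn : 3 ≤ n) (ℓ : ℕ) :
    (1 / Real.pi) *
        (∫ θ in (0 : ℝ)..Real.pi, gegenbauer (((n : ℝ) - 2) / 2) (2 * ℓ) (Real.cos θ))
      = genBinom ((ℓ : ℝ) + (n : ℝ) / 2 - 2) ℓ ^ 2 ∧
    (1 / Real.pi) *
        (∫ t in (-1 : ℝ)..1,
          gegenbauer (((n : ℝ) - 2) / 2) (2 * ℓ) t * (1 - t ^ 2) ^ (-(1 : ℝ) / 2)) /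
        ((2 * ℓ + n - 3).choose (2 * ℓ) : ℝ)
      = genBinom ((ℓ : ℝ) + (n : ℝ) / 2 - 2) ℓ ^ 2 / ((2 * ℓ + n - 3).choose (2 * ℓ) : ℝ) := by
  have hlam : 0 < ((n : ℝ) - 2) / 2 := by
    have : (3 : ℝ) ≤ n := by exact_mod_cast hn
    linarith
  have hcoeff :
      gegenbauerCoeff (((n : ℝ) - 2) / 2) ℓ = genBinom ((ℓ : ℝ) + (n : ℝ) / 2 - 2) ℓ := by
    rw [gegenbauerCoeff_eq_genBinom hlam]
    congr 1
    ring
  have haverage : (1 / π) * ∫ θ in (0 : ℝ)..π, gegenbauer (((n : ℝ) - 2) / 2) (2 * ℓ) (cos θ) =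
      genBinom ((ℓ : ℝ) + (n : ℝ) / 2 - 2) ℓ ^ 2 := by
    rw [integral_gegenbauer_cos, hcoeff]
    field_simp
  exact ⟨haverage, by rw [integral_mul_one_sub_sq_rpow_neg_half_eq_integral_comp_cos, haverage]⟩
end
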